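/- arXiv:2604.18343 — 2 statements merged into one kernel-verified Lean document; each statement's English description precedes it below -/
import Mathlib

section
/- Soundness of the overall planner (Theorem 1): Let φ be an STL formula in the disjunction-free positive normal form fragment with progress-based decomposition (P_φ, T_φ, Λ_φ), where P_φ = P^R ∪ P^I splits into reachability and invariance conditions, and let λ⃗* be a feasible assignment (a nonnegative-integer assignment of Λ_φ satisfying every constraint in T_φ). Let (x̃_0,t_0), …, (x̃_n,t_n) be timed waypoints with 0 = t_0 ≤ t_1 ≤ … ≤ t_n, such that for every reachability condition R(a_Λ,b_Λ,μ) ∈ P^R there exists an index i with t_i ∈ [a_Λ(λ⃗*), b_Λ(λ⃗*)] and h_μ(x̃_i) ≥ 0. Suppose the signal s : ℕ → ℝ^n satisfies: (i) s(t_i) = x̃_i for all i ∈ {0,…,n}; and (ii) for every invariance condition I(a_Λ,b_Λ,μ) ∈ P^I and every t ∈ [a_Λ(λ⃗*), b_Λ(λ⃗*)], h_μ(s t) ≥ 0. Then s ⊨ φ. -/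
/-- Until-prefix formulas of the fragment: built only from atomic predicates,
conjunction, and bounded always (no `F` or `U`). Interval bounds satisfy `a ≤ b`. -/
inductive PrefixSTL (n : ℕ) : Type where
  | atom (h : (Fin n → ℝ) → ℝ)
  | conj (φ₁ φ₂ : PrefixSTL n)
  | always (a b : ℕ) (hab : a ≤ b) (φ : PrefixSTL n)

/-- STL formulas of the disjunction-free positive normal form fragment over `ℝ^n`:
atomic predicates, conjunction, bounded eventually, bounded always, and bounded until
whose prefix contains no `F` or `U`. Interval bounds satisfy `a ≤ b`. -/
inductive STL (n : ℕ) : Type where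
  | atom (h : (Fin n → ℝ) → ℝ)
  | conj (φ₁ φ₂ : STL n)
  | ev (a b : ℕ) (hab : a ≤ b) (φ : STL n)
  | always (a b : ℕ) (hab : a ≤ b) (φ : STL n)
  | untl (ψ : PrefixSTL n) (a b : ℕ) (hab : a ≤ b) (φ : STL n)

/-- Boolean semantics of prefix formulas: `PrefixSTL.Sat s ψ t` means `s_t ⊨ ψ`. -/
def PrefixSTL.Sat {n : ℕ} (s : ℕ → Fin n → ℝ) : PrefixSTL n → ℕ → Prop
  | .atom h, t => 0 ≤ h (s t)
  | .conj φ₁ φ₂, t => PrefixSTL.Sat s φ₁ t ∧ PrefixSTL.Sat s φ₂ t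
  | .always a b _ φ, t => ∀ t', t + a ≤ t' → t' ≤ t + b → PrefixSTL.Sat s φ t'

/-- Boolean semantics: `STL.Sat s φ t` means `s_t ⊨ φ`. -/
def STL.Sat {n : ℕ} (s : ℕ → Fin n → ℝ) : STL n → ℕ → Prop
  | .atom h, t => 0 ≤ h (s t)
  | .conj φ₁ φ₂, t => STL.Sat s φ₁ t ∧ STL.Sat s φ₂ t
  | .ev a b _ φ, t => ∃ t', t + a ≤ t' ∧ t' ≤ t + b ∧ STL.Sat s φ t'
  | .always a b _ φ, t => ∀ t', t + a ≤ t' → t' ≤ t + b → STL.Sat s φ t'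
  | .untl ψ a b _ φ, t => ∃ t', t + a ≤ t' ∧ t' ≤ t + b ∧ STL.Sat s φ t' ∧
      ∀ t'', t ≤ t'' → t'' ≤ t' → PrefixSTL.Sat s ψ t''

/-- A symbolic progress condition over `nv` time variables: a kind flag
(`reach = true` for reachability `R`, `reach = false` for invariance `I`),
symbolic interval endpoints evaluated on assignments of the time variables,
and the evaluation function of the atomic predicate. -/
structure ProgCond (n nv : ℕ) : Type where
  reach : Bool
  lo : (Fin nv → ℕ) → ℕ
  hi : (Fin nv → ℕ) → ℕ
  pred : (Fin n → ℝ) → ℝ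

/-- Satisfaction of a progress condition on the signal `s` under the
time-variable assignment `lam`. -/
def ProgCond.Holds {n nv : ℕ} (c : ProgCond n nv) (lam : Fin nv → ℕ)
    (s : ℕ → Fin n → ℝ) : Prop :=
  if c.reach then ∃ t, c.lo lam ≤ t ∧ t ≤ c.hi lam ∧ 0 ≤ c.pred (s t)
  else ∀ t, c.lo lam ≤ t → t ≤ c.hi lam → 0 ≤ c.pred (s t)

/-- Reindex the time variables of a progress condition. -/
def ProgCond.comap {n nv nv' : ℕ} (c : ProgCond n nv)
    (f : (Fin nv' → ℕ) → Fin nv → ℕ) : ProgCond n nv' :=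
  ⟨c.reach, fun lam => c.lo (f lam), fun lam => c.hi (f lam), c.pred⟩

/-- Shift both endpoints of a progress condition by `k`. -/
def ProgCond.shiftBy {n nv : ℕ} (c : ProgCond n nv) (k : (Fin nv → ℕ) → ℕ) :
    ProgCond n nv :=
  ⟨c.reach, fun lam => c.lo lam + k lam, fun lam => c.hi lam + k lam, c.pred⟩

/-- A decomposition triple `(ℙ_φ, 𝕋_φ, Λ_φ)`: `nv` time variables, one interval
constraint per variable, and a finite list of symbolic progress conditions. -/
structure Decomp (n : ℕ) : Type where
  nv : ℕ
  constr : Fin nv → ℕ × ℕ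
  conds : List (ProgCond n nv)

/-- Feasible assignments: nonnegative integer assignments of the time variables
satisfying every interval constraint. -/
def Decomp.Feasible {n : ℕ} (D : Decomp n) (lam : Fin D.nv → ℕ) : Prop :=
  ∀ v, (D.constr v).1 ≤ lam v ∧ lam v ≤ (D.constr v).2

/-- Decomposition of an (F/U-free) until-prefix formula into invariance
conditions with constant endpoints `(c, d, h_μ)`. -/
def pdecomp {n : ℕ} : PrefixSTL n → List (ℕ × ℕ × ((Fin n → ℝ) → ℝ))
  | .atom h => [(0, 0, h)]
  | .conj φ₁ φ₂ => pdecomp φ₁ ++ pdecomp φ₂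
  | .always a b _ (.atom h) => [(a, b, h)]
  | .always a b _ φ =>
      (List.range (b + 1 - a)).flatMap fun k =>
        (pdecomp φ).map fun c => (c.1 + (a + k), c.2.1 + (a + k), c.2.2)

/-- The recursive progress-based decomposition `(ℙ_φ, 𝕋_φ, Λ_φ)` of an STL formula. -/
def decomp {n : ℕ} : STL n → Decomp n
  | .atom h => ⟨0, Fin.elim0, [⟨true, fun _ => 0, fun _ => 0, h⟩]⟩
  | .conj φ₁ φ₂ =>
      let D₁ := decomp φ₁
      let D₂ := decomp φ₂
      ⟨D₁.nv + D₂.nv,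
        fun v => Fin.addCases (motive := fun _ => ℕ × ℕ) D₁.constr D₂.constr v,
        (D₁.conds.map fun c => c.comap fun lam i => lam (Fin.castAdd D₂.nv i)) ++
        (D₂.conds.map fun c => c.comap fun lam i => lam (Fin.natAdd D₁.nv i))⟩
  | .ev a b _ φ =>
      let D := decomp φ
      ⟨D.nv + 1,
        Fin.snoc D.constr (a, b),
        D.conds.map fun c =>
          (c.comap fun lam i => lam i.castSucc).shiftBy fun lam => lam (Fin.last D.nv)⟩
  | .always a b _ (.atom h) =>
      ⟨0, Fin.elim0, [⟨false, fun _ => a, fun _ => b, h⟩]⟩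
  | .always a b _ φ =>
      let D := decomp φ
      ⟨(b + 1 - a) * D.nv,
        fun v => D.constr (finProdFinEquiv.symm v).2,
        (List.finRange (b + 1 - a)).flatMap fun k =>
          D.conds.map fun c =>
            (c.comap fun lam i => lam (finProdFinEquiv (k, i))).shiftBy
              fun _ => a + (k : ℕ)⟩
  | .untl ψ a b _ φ =>
      let D := decomp φ
      ⟨D.nv + 1,
        Fin.snoc D.constr (a, b),
        (D.conds.map fun c =>
          (c.comap fun lam i => lam i.castSucc).shiftBy fun lam => lam (Fin.last D.nv)) ++
        ((pdecomp ψ).map fun c =>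
          ⟨false, fun _ => c.1, fun lam => c.2.1 + lam (Fin.last D.nv), c.2.2⟩)⟩

/-!
Induction on `φ`, strengthened to read the decomposition at an arbitrary start time `k`: the time
variable of `F_{[a,b]}` or `U_{[a,b]}` supplies the witness time `k + λ ∈ [k + a, k + b]`, the copy
with index `j` in the decomposition of `G_{[a,b]} φ` covers time `k + a + j`, and the invariance
conditions of an until-prefix cover `[k, k + λ]`. At the root (`k = 0`) the reachability conditions
are witnessed by the waypoints, since the signal passes through them.
-/

namespace ProgCond

variable {n nv : ℕ} {s : ℕ → Fin n → ℝ}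

theorem holds_shiftBy_shiftBy (c : ProgCond n nv) (g : (Fin nv → ℕ) → ℕ) (k : ℕ)
    (lam : Fin nv → ℕ) :
    ((c.shiftBy g).shiftBy fun _ => k).Holds lam s ↔
      (c.shiftBy fun _ => k + g lam).Holds lam s := by
  simp only [Holds, shiftBy, Nat.add_assoc, Nat.add_comm (g lam) k]
  rfl

end ProgCond

namespace Decomp

variable {n : ℕ}

/- The cases of `decomp` for a conjunction, for `F_{[a,b]}` (and the `φ₂`-part of `U_{[a,b]}`),
and for `G_{[a,b]}` of a non-atomic formula. -/

def conj (D₁ D₂ : Decomp n) : Decomp n :=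
  ⟨D₁.nv + D₂.nv,
    fun v => Fin.addCases (motive := fun _ => ℕ × ℕ) D₁.constr D₂.constr v,
    (D₁.conds.map fun c => c.comap fun lam i => lam (Fin.castAdd D₂.nv i)) ++
    (D₂.conds.map fun c => c.comap fun lam i => lam (Fin.natAdd D₁.nv i))⟩

def delay (D : Decomp n) (a b : ℕ) : Decomp n :=
  ⟨D.nv + 1,
    Fin.snoc D.constr (a, b),
    D.conds.map fun c =>
      (c.comap fun lam i => lam i.castSucc).shiftBy fun lam => lam (Fin.last D.nv)⟩

def replicate (D : Decomp n) (a b : ℕ) : Decomp n :=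
  ⟨(b + 1 - a) * D.nv,
    fun v => D.constr (finProdFinEquiv.symm v).2,
    (List.finRange (b + 1 - a)).flatMap fun k =>
      D.conds.map fun c =>
        (c.comap fun lam i => lam (finProdFinEquiv (k, i))).shiftBy fun _ => a + (k : ℕ)⟩

/-- The conditions of `D` read relative to start time `k`, i.e. on the suffix signal `s_k`. -/
def HoldsAt (D : Decomp n) (lam : Fin D.nv → ℕ) (s : ℕ → Fin n → ℝ) (k : ℕ) : Prop :=
  ∀ c ∈ D.conds, (c.shiftBy fun _ => k).Holds lam s

variable {D D₁ D₂ : Decomp n} {s : ℕ → Fin n → ℝ} {a b k : ℕ}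

section conj

variable {lam : Fin (D₁.conj D₂).nv → ℕ}

theorem Feasible.conj_left (h : (D₁.conj D₂).Feasible lam) :
    D₁.Feasible fun i => lam (Fin.castAdd D₂.nv i) := fun v => by
  simpa [conj] using h (Fin.castAdd _ v)

theorem Feasible.conj_right (h : (D₁.conj D₂).Feasible lam) :
    D₂.Feasible fun i => lam (Fin.natAdd D₁.nv i) := fun v => by
  simpa [conj] using h (Fin.natAdd _ v)

theorem HoldsAt.conj_left (h : (D₁.conj D₂).HoldsAt lam s k) :
    D₁.HoldsAt (fun i => lam (Fin.castAdd D₂.nv i)) s k := fun _ hc =>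
  h _ (List.mem_append_left _ (List.mem_map_of_mem hc))

theorem HoldsAt.conj_right (h : (D₁.conj D₂).HoldsAt lam s k) :
    D₂.HoldsAt (fun i => lam (Fin.natAdd D₁.nv i)) s k := fun _ hc =>
  h _ (List.mem_append_right _ (List.mem_map_of_mem hc))

end conj

section delay

variable {lam : Fin (D.delay a b).nv → ℕ}

theorem Feasible.of_delay (h : (D.delay a b).Feasible lam) :
    D.Feasible fun i => lam i.castSucc := fun v => by
  simpa [delay] using h v.castSucc

theorem Feasible.delay_last_mem (h : (D.delay a b).Feasible lam) :
    a ≤ lam (Fin.last D.nv) ∧ lam (Fin.last D.nv) ≤ b := by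
  simpa [delay] using h (Fin.last _)

theorem HoldsAt.of_delay (h : (D.delay a b).HoldsAt lam s k) :
    D.HoldsAt (fun i => lam i.castSucc) s (k + lam (Fin.last D.nv)) := fun _ hc =>
  (ProgCond.holds_shiftBy_shiftBy _ _ _ _).1 (h _ (List.mem_map_of_mem hc))

end delay

section replicate

variable {lam : Fin (D.replicate a b).nv → ℕ}

theorem Feasible.replicate_slice (h : (D.replicate a b).Feasible lam) (j : Fin (b + 1 - a)) :
    D.Feasible fun i => lam (finProdFinEquiv (j, i)) := fun v => by
  simpa [replicate] using h (finProdFinEquiv (j, v))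

theorem HoldsAt.replicate_slice (h : (D.replicate a b).HoldsAt lam s k) (j : Fin (b + 1 - a)) :
    D.HoldsAt (fun i => lam (finProdFinEquiv (j, i))) s (k + (a + j)) := fun _ hc =>
  (ProgCond.holds_shiftBy_shiftBy _ _ _ _).1
    (h _ (List.mem_flatMap.2 ⟨j, List.mem_finRange j, List.mem_map_of_mem hc⟩))

end replicate

end Decomp

theorem PrefixSTL.sat_of_pdecomp {n : ℕ} {s : ℕ → Fin n → ℝ} (ψ : PrefixSTL n) {k : ℕ}
    (H : ∀ p ∈ pdecomp ψ, ∀ t, k + p.1 ≤ t → t ≤ k + p.2.1 → 0 ≤ p.2.2 (s t)) :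
    PrefixSTL.Sat s ψ k := by
  induction ψ generalizing k with
  | atom h => exact H _ (List.mem_singleton_self _) k le_rfl le_rfl
  | conj ψ₁ ψ₂ ih₁ ih₂ =>
    exact ⟨ih₁ fun p hp => H p (List.mem_append_left _ hp),
      ih₂ fun p hp => H p (List.mem_append_right _ hp)⟩
  | always a b hab ψ ih =>
    cases ψ with
    | atom h => exact fun t h₁ h₂ => H _ (List.mem_singleton_self _) t h₁ h₂
    | conj | always =>
      intro t' h₁ h₂
      obtain ⟨j, hj, rfl⟩ : ∃ j < b + 1 - a, t' = k + (a + j) := ⟨t' - k - a, by omega, by omega⟩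
      refine ih fun p hp t ht₁ ht₂ => H (p.1 + (a + j), p.2.1 + (a + j), p.2.2) ?_ t ?_ ?_
      · exact List.mem_flatMap.2 ⟨j, List.mem_range.2 hj, List.mem_map_of_mem hp⟩
      all_goals dsimp only; omega

open Decomp in
theorem STL.sat_of_holdsAt {n : ℕ} {s : ℕ → Fin n → ℝ} (φ : STL n) {lam : Fin (decomp φ).nv → ℕ}
    (hlam : (decomp φ).Feasible lam) {k : ℕ} (H : (decomp φ).HoldsAt lam s k) :
    STL.Sat s φ k := by
  induction φ generalizing k with
  | atom h =>
    obtain ⟨t, h₁, h₂, ht⟩ : ∃ t, 0 + k ≤ t ∧ t ≤ 0 + k ∧ 0 ≤ h (s t) :=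
      H _ (List.mem_singleton_self _)
    obtain rfl : t = k := by omega
    exact ht
  | conj φ₁ φ₂ ih₁ ih₂ =>
    exact ⟨ih₁ (Feasible.conj_left (D₂ := decomp φ₂) hlam) H.conj_left,
      ih₂ (Feasible.conj_right (D₁ := decomp φ₁) hlam) H.conj_right⟩
  | ev a b hab φ ih =>
    have hlast := Feasible.delay_last_mem (D := decomp φ) hlam
    exact ⟨_, by omega, by omega, ih hlam.of_delay (HoldsAt.of_delay (D := decomp φ) H)⟩
  | always a b hab φ ih =>
    cases φ with
    | atom h =>
      have hinv : ∀ t, a + k ≤ t → t ≤ b + k → 0 ≤ h (s t) := H _ (List.mem_singleton_self _)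
      exact fun t h₁ h₂ => hinv t (by omega) (by omega)
    | conj | ev | always | untl =>
      intro t' h₁ h₂
      obtain ⟨j, rfl⟩ : ∃ j : Fin (b + 1 - a), t' = k + (a + j) :=
        ⟨⟨t' - k - a, by omega⟩, by dsimp only; omega⟩
      exact ih (Feasible.replicate_slice (D := decomp _) hlam j)
        (HoldsAt.replicate_slice (D := decomp _) H j)
  | untl ψ a b hab φ ih =>
    have hlast := Feasible.delay_last_mem (D := decomp φ) hlam
    have hdelay : ((decomp φ).delay a b).HoldsAt lam s k := fun c hc =>
      H c (List.mem_append_left _ hc)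
    refine ⟨_, by omega, by omega, ih hlam.of_delay hdelay.of_delay, fun t' h₁ h₂ => ?_⟩
    refine ψ.sat_of_pdecomp fun p hp t ht₁ ht₂ => ?_
    have hinv : ∀ t, p.1 + k ≤ t → t ≤ p.2.1 + lam (Fin.last _) + k → 0 ≤ p.2.2 (s t) :=
      H _ (List.mem_append_right _ (List.mem_map_of_mem hp))
    exact hinv t (by omega) (by omega)

theorem overall_planner_sound_general {n : ℕ} (φ : STL n) (s : ℕ → Fin n → ℝ)
    (lam : Fin (decomp φ).nv → ℕ) (hlam : (decomp φ).Feasible lam)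
    (m : ℕ) (wx : Fin (m + 1) → Fin n → ℝ) (wt : Fin (m + 1) → ℕ)
    (hreach : ∀ c ∈ (decomp φ).conds, c.reach = true →
      ∃ i : Fin (m + 1), c.lo lam ≤ wt i ∧ wt i ≤ c.hi lam ∧ 0 ≤ c.pred (wx i))
    (hway : ∀ i : Fin (m + 1), s (wt i) = wx i)
    (hinv : ∀ c ∈ (decomp φ).conds, c.reach = false →
      ∀ t, c.lo lam ≤ t → t ≤ c.hi lam → 0 ≤ c.pred (s t)) :
    STL.Sat s φ 0 := by
  refine φ.sat_of_holdsAt hlam fun c hc => show c.Holds lam s from ?_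
  unfold ProgCond.Holds
  split_ifs with hr
  · obtain ⟨i, hlo, hhi, hi⟩ := hreach c hc hr
    exact ⟨wt i, hlo, hhi, hway i ▸ hi⟩
  · exact hinv c hc (eq_false_of_ne_true hr)

/-- **Soundness of the overall planner (Theorem 1).**
Let `lam` be a feasible assignment of the decomposition of `φ`, and let
`(wx 0, wt 0), …, (wx m, wt m)` be timed waypoints with `wt 0 = 0` and nondecreasing
times such that every reachability condition of the decomposition is witnessed at some
waypoint inside its evaluated window. If the signal `s` passes through all waypoints at
their assigned times and satisfies every invariance condition of the decomposition over
its full evaluated active interval, then `s ⊨ φ`. -/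
theorem overall_planner_sound {n : ℕ} (φ : STL n) (s : ℕ → Fin n → ℝ)
    (lam : Fin (decomp φ).nv → ℕ) (hlam : (decomp φ).Feasible lam)
    (m : ℕ) (wx : Fin (m + 1) → Fin n → ℝ) (wt : Fin (m + 1) → ℕ)
    (hwt0 : wt 0 = 0) (hmono : Monotone wt)
    (hreach : ∀ c ∈ (decomp φ).conds, c.reach = true →
      ∃ i : Fin (m + 1), c.lo lam ≤ wt i ∧ wt i ≤ c.hi lam ∧ 0 ≤ c.pred (wx i))
    (hway : ∀ i : Fin (m + 1), s (wt i) = wx i)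
    (hinv : ∀ c ∈ (decomp φ).conds, c.reach = false →
      ∀ t, c.lo lam ≤ t → t ≤ c.hi lam → 0 ≤ c.pred (s t)) :
    STL.Sat s φ 0 :=
  overall_planner_sound_general φ s lam hlam m wx wt hreach hway hinv
end

section
/- Inductive step for an outer bounded-until operator with invariance-only prefix: Let s : ℕ → ℝ^n be a signal. Let ψ be an STL formula of the disjunction-free positive normal form fragment such that there are a finite index set I0, constants c_i ≤ d_i in ℕ, and evaluation functions h'_i : ℝ^n → ℝ (i ∈ I0) with: for every τ ∈ ℕ, s_τ ⊨ ψ if and only if for every i ∈ I0 and every t ∈ [c_i, d_i], h'_i(s(τ+t)) ≥ 0. Let φ be an STL formula of the fragment, J a finite index set, F a set of assignments, and for each j ∈ J let κ_j ∈ {reach, inv}, a_j, b_j : F → ℕ with a_j(λ) ≤ b_j(λ) for all λ ∈ F, and h_j : ℝ^n → ℝ; say condition j holds at shift k under λ on s if either κ_j = reach and there exists t ∈ [a_j(λ)+k, b_j(λ)+k] with h_j(s t) ≥ 0, or κ_j = inv and for every t ∈ [a_j(λ)+k, b_j(λ)+k], h_j(s t) ≥ 0; and suppose for every k ∈ ℕ: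 s_k ⊨ φ if and only if there exists λ ∈ F with every condition j ∈ J holding at shift k under λ on s. Then for all natural numbers a ≤ b: s_0 ⊨ ψ U_{[a,b]} φ if and only if there exists λ* ∈ [a,b] such that (1) there exists λ ∈ F with every condition j ∈ J holding at shift λ* under λ on s, and (2) for every i ∈ I0 and every t ∈ [c_i, d_i + λ*], h'_i(s t) ≥ 0. -/
/-- A single (reachability or invariance) condition on the signal `s` over the
concrete interval `[lo, hi]` with predicate evaluation function `h`:
if `reach = true` it requires `∃ t ∈ [lo,hi], h (s t) ≥ 0`, and if `reach = false`
it requires `∀ t ∈ [lo,hi], h (s t) ≥ 0`. -/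
def holdsAt {n : ℕ} (s : ℕ → Fin n → ℝ) (reach : Bool) (lo hi : ℕ)
    (h : (Fin n → ℝ) → ℝ) : Prop :=
  if reach then ∃ t, lo ≤ t ∧ t ≤ hi ∧ 0 ≤ h (s t)
  else ∀ t, lo ≤ t → t ≤ hi → 0 ≤ h (s t)

lemma PrefixSTL.sat_shift {n : ℕ} (s : ℕ → Fin n → ℝ) (ψ : PrefixSTL n) :
    ∀ k t, PrefixSTL.Sat (fun u => s (k + u)) ψ t ↔ PrefixSTL.Sat s ψ (k + t) := by
  induction ψ with
  | atom h => intro k t; exact Iff.rfl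
  | conj φ₁ φ₂ ih1 ih2 => intro k t; exact and_congr (ih1 k t) (ih2 k t)
  | always a b hab φ ih =>
    intro k t
    constructor
    · intro H t' h1 h2
      have := (ih k (t' - k)).mp (H (t' - k) (by omega) (by omega))
      have e : k + (t' - k) = t' := by omega
      rwa [e] at this
    · intro H t' h1 h2
      exact (ih k t').mpr (H (k + t') (by omega) (by omega))

lemma STL.sat_shift {n : ℕ} (s : ℕ → Fin n → ℝ) (φ : STL n) :
    ∀ k t, STL.Sat (fun u => s (k + u)) φ t ↔ STL.Sat s φ (k + t) := by
  induction φ with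
  | atom h => intro k t; exact Iff.rfl
  | conj φ₁ φ₂ ih1 ih2 => intro k t; exact and_congr (ih1 k t) (ih2 k t)
  | ev a b hab φ ih =>
    intro k t
    constructor
    · rintro ⟨t', h1, h2, hs⟩
      exact ⟨k + t', by omega, by omega, (ih k t').mp hs⟩
    · rintro ⟨t', h1, h2, hs⟩
      refine ⟨t' - k, by omega, by omega, ?_⟩
      have := (ih k (t' - k)).mpr
      have e : k + (t' - k) = t' := by omega
      rw [e] at this
      exact this hs
  | always a b hab φ ih =>
    intro k t
    constructor
    · intro H t' h1 h2
      have := (ih k (t' - k)).mp (H (t' - k) (by omega) (by omega))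
      have e : k + (t' - k) = t' := by omega
      rwa [e] at this
    · intro H t' h1 h2
      exact (ih k t').mpr (H (k + t') (by omega) (by omega))
  | untl ψ a b hab φ ih =>
    intro k t
    constructor
    · rintro ⟨t', h1, h2, hs, hpre⟩
      refine ⟨k + t', by omega, by omega, (ih k t').mp hs, ?_⟩
      intro t'' h3 h4
      have := (PrefixSTL.sat_shift s ψ k (t'' - k)).mp (hpre (t'' - k) (by omega) (by omega))
      have e : k + (t'' - k) = t'' := by omega
      rwa [e] at this
    · rintro ⟨t', h1, h2, hs, hpre⟩
      refine ⟨t' - k, by omega, by omega, ?_, ?_⟩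
      · have := (ih k (t' - k)).mpr
        have e : k + (t' - k) = t' := by omega
        rw [e] at this
        exact this hs
      · intro t'' h3 h4
        exact (PrefixSTL.sat_shift s ψ k t'').mpr (hpre (k + t'') (by omega) (by omega))

/-- **Inductive step for an outer bounded-until operator with invariance-only prefix.**
Suppose the prefix `ψ` (a formula of the fragment containing no `F` or `U`) is
characterized by finitely many constant-endpoint invariance conditions: for every
`τ : ℕ`, the suffix signal `s_τ` satisfies `ψ` iff
`∀ i, ∀ t ∈ [c i, d i], h' i (s (τ + t)) ≥ 0`. Suppose further that for every `k : ℕ`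
the suffix signal `s_k` satisfies `φ` iff some `lam ∈ F` makes all conditions `j ∈ J`
hold at shift `k`. Then for `a ≤ b`: `s_0 ⊨ ψ U_{[a,b]} φ` iff there is
`λ* ∈ [a,b]` such that (1) some `lam ∈ F` makes all conditions hold at shift `λ*`,
and (2) `∀ i, ∀ t ∈ [c i, d i + λ*], h' i (s t) ≥ 0`. -/
theorem until_inductive_step {n : ℕ} (s : ℕ → Fin n → ℝ)
    (ψ : PrefixSTL n) {I0 : Type} [Fintype I0]
    (c d : I0 → ℕ) (hcd : ∀ i, c i ≤ d i) (h' : I0 → (Fin n → ℝ) → ℝ)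
    (hψ : ∀ τ : ℕ,
      PrefixSTL.Sat (fun t => s (τ + t)) ψ 0 ↔
        ∀ i, ∀ t, c i ≤ t → t ≤ d i → 0 ≤ h' i (s (τ + t)))
    (φ : STL n) {J Λ : Type} [Fintype J] (F : Set Λ)
    (κ : J → Bool) (aj bj : J → Λ → ℕ) (hj : J → (Fin n → ℝ) → ℝ)
    (hwin : ∀ j, ∀ lam ∈ F, aj j lam ≤ bj j lam)
    (hiff : ∀ k : ℕ,
      STL.Sat (fun t => s (k + t)) φ 0 ↔
        ∃ lam ∈ F, ∀ j, holdsAt s (κ j) (aj j lam + k) (bj j lam + k) (hj j))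
    (a b : ℕ) (hab : a ≤ b) :
    STL.Sat s (STL.untl ψ a b hab φ) 0 ↔
      ∃ lstar, a ≤ lstar ∧ lstar ≤ b ∧
        (∃ lam ∈ F, ∀ j,
          holdsAt s (κ j) (aj j lam + lstar) (bj j lam + lstar) (hj j)) ∧
        (∀ i, ∀ t, c i ≤ t → t ≤ d i + lstar → 0 ≤ h' i (s t)) := by
  have hψ' : ∀ τ, PrefixSTL.Sat s ψ τ ↔
      ∀ i, ∀ t, c i ≤ t → t ≤ d i → 0 ≤ h' i (s (τ + t)) := by
    intro τ
    rw [← hψ τ, PrefixSTL.sat_shift]; simp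
  have hφ' : ∀ k, STL.Sat s φ k ↔
      ∃ lam ∈ F, ∀ j, holdsAt s (κ j) (aj j lam + k) (bj j lam + k) (hj j) := by
    intro k
    rw [← hiff k, STL.sat_shift]; simp
  constructor
  · rintro ⟨t', h1, h2, hs, hpre⟩
    refine ⟨t', by omega, by omega, (hφ' t').mp hs, ?_⟩
    intro i t hc hd
    by_cases ht : t ≤ d i
    · have := (hψ' 0).mp (hpre 0 (by omega) (by omega)) i t hc ht
      simpa using this
    · have := (hψ' (t - d i)).mp (hpre (t - d i) (by omega) (by omega)) i (d i)
        (hcd i) le_rfl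
      have e : t - d i + d i = t := by omega
      rwa [e] at this
  · rintro ⟨lstar, h1, h2, hφc, hinv⟩
    refine ⟨lstar, by omega, by omega, (hφ' lstar).mpr hφc, ?_⟩
    intro t'' h3 h4
    rw [hψ' t'']
    intro i t hc hd
    exact hinv i (t'' + t) (by omega) (by omega)
end
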